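/- Assume d is not a square in F. Then: (1) for every integer r ≥ 1, T(F)·diag(ϖ^r, 1)·GL₂(o) = T(F)·diag(ϖ^r, 1)·I ∪ T(F)·diag(ϖ^r, 1)·w·I, and the two double cosets on the right are disjoint; (2) if a + bu + cu² ∈ o^× for every u ∈ o, then T(F)·GL₂(o) = T(F)·I = T(F)·w·I; (3) if u₀ ∈ o satisfies c·u₀² + b·u₀ + a ∈ p, while a + bu + cu² ∈ o^× for every u ∈ o with u − u₀ ∉ p, then T(F)·GL₂(o) = T(F)·w·I ∪ T(F)·[[1, 0], [u₀, 1]]·I and these two double cosets are disjoint. -/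

import Mathlib

open scoped Pointwise
open Matrix

noncomputable section

abbrev Zm0 : Type := WithZero (Multiplicative ℤ)

/-- `ev n` is the value (in `ℤₘ₀ = WithZero (Multiplicative ℤ)`) of an element of additive
valuation `n`; thus `x ∈ 𝔭^n` iff `v x ≤ ev n`, `x ∈ 𝔬` iff `v x ≤ ev 0`, and `x ∈ 𝔬^×` iff
`v x = ev 0`. -/
def ev (n : ℤ) : Zm0 := ((Multiplicative.ofAdd (-n) : Multiplicative ℤ) : Zm0)

variable {F : Type*} [Field F]

/-- the matrix t(x,y) = [[x, cy],[−ay, x−by]] -/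
def tmat (a b c x y : F) : Matrix (Fin 2) (Fin 2) F :=
  !![x, c * y; -(a * y), x - b * y]

/-- the torus T(F) ⊆ GL₂(F), as a set of matrices -/
def TSet (a b c : F) : Set (Matrix (Fin 2) (Fin 2) F) :=
  {m | ∃ x y : F, x ^ 2 - b * x * y + a * c * y ^ 2 ≠ 0 ∧ m = tmat a b c x y}

def wmat (F : Type*) [Field F] : Matrix (Fin 2) (Fin 2) F := !![0, 1; -1, 0]

/-- GL₂(𝔬) : integral entries and unit determinant -/
def GL2O (v : Valuation F Zm0) : Set (Matrix (Fin 2) (Fin 2) F) :=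
  {g | (∀ i j, v (g i j) ≤ ev 0) ∧ v g.det = ev 0}

/-- the Iwahori subgroup I = { g ∈ GL₂(𝔬) : g₂₁ ∈ 𝔭 } -/
def Iwahori (v : Valuation F Zm0) : Set (Matrix (Fin 2) (Fin 2) F) :=
  {g | g ∈ GL2O v ∧ v (g 1 0) ≤ ev 1}

/-!
For `g, k ∈ GL₂(𝔬)` one has `k ∈ g I` exactly when the first columns of `g` and `k` are
proportional modulo `𝔭`. Let `Q(u) = a + bu + cu²` and let `(α, γ)` be the first column of `k`.
The torus element `t = t(bα + cγ, α)` satisfies `t w e₁ = -c (α, γ)` and has norm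
`c (aα² + bαγ + cγ²)`, so `k ∈ T w I` as soon as `Q(γ / α)` is a unit; otherwise `k ∈ w I` (if
`α ∈ 𝔭`) or `k ∈ [[1, 0], [u₀, 1]] I` (if `γ / α ≡ u₀`). Conversely, `t(x, y) w ∈ [[1, 0], [u₀, 1]] I`
forces `x ≡ (b + cu₀) y` modulo `𝔭`, and then the norm `x² - bxy + acy² ≡ c Q(u₀) y²` lies in `𝔭`,
which is impossible in `GL₂(𝔬)`. When `a = Q(0)` is a unit, `w ∈ t(0, 1) I`, whence `T I = T w I`.

Conjugation by `diag(ϖʳ, 1)` turns `T` into the torus of `(aϖ²ʳ, bϖʳ, c)`, whose residual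
quadratic `c u²` has the single root `0`; so part (1) is part (3) with `u₀ = 0`.
-/

section

variable {v : Valuation F Zm0} {a b c u₀ : F}

lemma ev_zero : ev 0 = 1 := rfl

lemma le_ev_one_iff {ζ : Zm0} : ζ ≤ ev 1 ↔ ζ < 1 := by
  change ζ ≤ WithZero.exp (-1) ↔ _
  rw [← WithZero.lt_mul_exp_iff_le WithZero.exp_ne_zero, ← WithZero.exp_add, neg_add_cancel,
    WithZero.exp_zero]

lemma mem_GL2O_iff {g : Matrix (Fin 2) (Fin 2) F} :
    g ∈ GL2O v ↔ (∀ i j, v (g i j) ≤ 1) ∧ v g.det = 1 := Iff.rfl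

lemma mem_GL2O_of_fin_two_iff {p q r s : F} :
    !![p, q; r, s] ∈ GL2O v ↔
      v p ≤ 1 ∧ v q ≤ 1 ∧ v r ≤ 1 ∧ v s ≤ 1 ∧ v (p * s - q * r) = 1 := by
  simp [mem_GL2O_iff, Fin.forall_fin_two, det_fin_two_of, and_assoc]

lemma mem_Iwahori_iff {g : Matrix (Fin 2) (Fin 2) F} :
    g ∈ Iwahori v ↔ g ∈ GL2O v ∧ v (g 1 0) < 1 := by
  rw [Iwahori, Set.mem_ofPred_eq, le_ev_one_iff]

lemma Iwahori_subset_GL2O : Iwahori v ⊆ GL2O v := fun _ hg => hg.1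

lemma isUnit_det_of_mem_GL2O {g : Matrix (Fin 2) (Fin 2) F} (hg : g ∈ GL2O v) :
    IsUnit g.det :=
  isUnit_iff_ne_zero.mpr fun h => by simpa [h] using (mem_GL2O_iff.mp hg).2

lemma mul_mem_GL2O {g h : Matrix (Fin 2) (Fin 2) F} (hg : g ∈ GL2O v) (hh : h ∈ GL2O v) :
    g * h ∈ GL2O v := by
  rw [mem_GL2O_iff] at *
  refine ⟨fun i j => ?_, by rw [det_mul, map_mul, hg.2, hh.2, one_mul]⟩
  rw [mul_apply]
  exact v.map_sum_le fun k _ => by rw [map_mul]; exact mul_le_one' (hg.1 i k) (hh.1 k j)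

lemma inv_eq_fin_two (g : Matrix (Fin 2) (Fin 2) F) :
    g⁻¹ = g.det⁻¹ • !![g 1 1, -g 0 1; -g 1 0, g 0 0] := by
  rw [inv_def, ← adjugate_fin_two, Ring.inverse_eq_inv']

lemma inv_mem_GL2O {g : Matrix (Fin 2) (Fin 2) F} (hg : g ∈ GL2O v) : g⁻¹ ∈ GL2O v := by
  rw [mem_GL2O_iff] at *
  have hdet : v g.det⁻¹ = 1 := by rw [map_inv₀, hg.2, inv_one]
  refine ⟨fun i j => ?_, by rw [det_nonsing_inv, Ring.inverse_eq_inv', hdet]⟩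
  rw [inv_eq_fin_two, Matrix.smul_apply, smul_eq_mul, map_mul, hdet, one_mul]
  fin_cases i <;> fin_cases j <;> simpa using hg.1 _ _

lemma mul_mem_Iwahori {g h : Matrix (Fin 2) (Fin 2) F} (hg : g ∈ Iwahori v)
    (hh : h ∈ Iwahori v) : g * h ∈ Iwahori v := by
  rw [mem_Iwahori_iff] at *
  refine ⟨mul_mem_GL2O hg.1 hh.1, ?_⟩
  rw [mul_apply, Fin.sum_univ_two]
  refine v.map_add_lt ?_ ?_ <;> rw [map_mul]
  · exact mul_lt_one_of_lt_of_le hg.2 ((mem_GL2O_iff.mp hh.1).1 0 0)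
  · exact (mul_le_of_le_one_left' ((mem_GL2O_iff.mp hg.1).1 1 1)).trans_lt hh.2

lemma inv_mem_Iwahori {g : Matrix (Fin 2) (Fin 2) F} (hg : g ∈ Iwahori v) :
    g⁻¹ ∈ Iwahori v := by
  rw [mem_Iwahori_iff] at *
  refine ⟨inv_mem_GL2O hg.1, ?_⟩
  simpa [inv_eq_fin_two, (mem_GL2O_iff.mp hg.1).2] using hg.2

lemma det_tmat (x y : F) : (tmat a b c x y).det = x ^ 2 - b * x * y + a * c * y ^ 2 := by
  rw [tmat, det_fin_two_of]; ring

lemma mem_TSet_iff {t : Matrix (Fin 2) (Fin 2) F} :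
    t ∈ TSet a b c ↔ ∃ x y : F, (tmat a b c x y).det ≠ 0 ∧ t = tmat a b c x y := by
  simp only [TSet, Set.mem_ofPred_eq, det_tmat]

lemma isUnit_det_of_mem_TSet {t : Matrix (Fin 2) (Fin 2) F} (ht : t ∈ TSet a b c) :
    IsUnit t.det := by
  obtain ⟨x, y, hN, rfl⟩ := mem_TSet_iff.mp ht
  exact isUnit_iff_ne_zero.mpr hN

lemma one_mem_TSet : (1 : Matrix (Fin 2) (Fin 2) F) ∈ TSet a b c :=
  ⟨1, 0, by norm_num, by rw [tmat, one_fin_two]; simp⟩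

lemma tmat_mul_tmat (x y x' y' : F) :
    tmat a b c x y * tmat a b c x' y' =
      tmat a b c (x * x' - a * c * (y * y')) (x * y' + y * x' - b * (y * y')) := by
  ext i j
  fin_cases i <;> fin_cases j <;> simp [tmat] <;> ring

lemma mul_mem_TSet {t t' : Matrix (Fin 2) (Fin 2) F} (ht : t ∈ TSet a b c)
    (ht' : t' ∈ TSet a b c) : t * t' ∈ TSet a b c := by
  obtain ⟨x, y, -, rfl⟩ := mem_TSet_iff.mp ht
  obtain ⟨x', y', -, rfl⟩ := mem_TSet_iff.mp ht'
  refine mem_TSet_iff.mpr ⟨_, _, ?_, tmat_mul_tmat x y x' y'⟩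
  rw [← tmat_mul_tmat, det_mul]
  exact mul_ne_zero (isUnit_det_of_mem_TSet ht).ne_zero (isUnit_det_of_mem_TSet ht').ne_zero

lemma inv_mem_TSet {t : Matrix (Fin 2) (Fin 2) F} (ht : t ∈ TSet a b c) : t⁻¹ ∈ TSet a b c := by
  obtain ⟨x, y, hN, rfl⟩ := mem_TSet_iff.mp ht
  have h : (tmat a b c x y)⁻¹ = tmat a b c ((tmat a b c x y).det⁻¹ * (x - b * y))
      (-((tmat a b c x y).det⁻¹ * y)) := by
    rw [inv_eq_fin_two]
    generalize (tmat a b c x y).det⁻¹ = n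
    ext i j
    fin_cases i <;> fin_cases j <;> simp [tmat] <;> ring
  refine mem_TSet_iff.mpr ⟨_, _, ?_, h⟩
  rw [← h, det_nonsing_inv, Ring.inverse_eq_inv']
  exact inv_ne_zero hN

lemma mem_mul_singleton_mul_iff {M : Type*} [Mul M] {A S : Set M} {m z : M} :
    z ∈ A * {m} * S ↔ ∃ t ∈ A, ∃ s ∈ S, t * m * s = z := by
  simp [Set.mem_mul]

lemma mem_singleton_mul_Iwahori_iff {g k : Matrix (Fin 2) (Fin 2) F} (hg : g ∈ GL2O v) :
    k ∈ {g} * Iwahori v ↔ k ∈ GL2O v ∧ v (g 0 0 * k 1 0 - g 1 0 * k 0 0) < 1 := by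
  have hdet := (mem_GL2O_iff.mp hg).2
  rw [Set.singleton_mul, Set.mem_image]
  constructor
  · rintro ⟨i, hi, rfl⟩
    rw [mem_Iwahori_iff] at hi
    refine ⟨mul_mem_GL2O hg hi.1, ?_⟩
    have h : g 0 0 * (g * i) 1 0 - g 1 0 * (g * i) 0 0 = g.det * i 1 0 := by
      simp only [mul_apply, Fin.sum_univ_two, det_fin_two]; ring
    rw [h, map_mul, hdet, one_mul]
    exact hi.2
  · rintro ⟨hk, hlt⟩
    refine ⟨g⁻¹ * k, mem_Iwahori_iff.mpr ⟨mul_mem_GL2O (inv_mem_GL2O hg) hk, ?_⟩,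
      mul_nonsing_inv_cancel_left _ _ (isUnit_det_of_mem_GL2O hg)⟩
    have h : (g⁻¹ * k) 1 0 = g.det⁻¹ * (g 0 0 * k 1 0 - g 1 0 * k 0 0) := by
      simp only [inv_eq_fin_two, mul_apply, Fin.sum_univ_two, Matrix.smul_apply, of_apply,
        cons_val', cons_val_zero, cons_val_one, empty_val', cons_val_fin_one, smul_eq_mul]
      ring
    rw [h, map_mul, map_inv₀, hdet, inv_one, one_mul]
    exact hlt

lemma mem_TSet_mul_singleton_mul_Iwahori {m k : Matrix (Fin 2) (Fin 2) F}
    (hk : k ∈ {m} * Iwahori v) : k ∈ TSet a b c * {m} * Iwahori v := by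
  rw [Set.singleton_mul] at hk
  obtain ⟨i, hi, rfl⟩ := hk
  exact mem_mul_singleton_mul_iff.mpr ⟨1, one_mem_TSet, i, hi, by rw [one_mul]⟩

lemma TSet_mul_singleton_mul_Iwahori_subset {m : Matrix (Fin 2) (Fin 2) F} (hm : m ∈ GL2O v) :
    TSet a b c * {m} * Iwahori v ⊆ TSet a b c * GL2O v := by
  intro z hz
  obtain ⟨t, ht, i, hi, rfl⟩ := mem_mul_singleton_mul_iff.mp hz
  exact Set.mem_mul.mpr ⟨t, ht, m * i, mul_mem_GL2O hm (Iwahori_subset_GL2O hi), by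
    rw [mul_assoc]⟩

lemma TSet_mul_singleton_mul_Iwahori_inter_eq_empty {m₁ m₂ : Matrix (Fin 2) (Fin 2) F}
    (h : ∀ t ∈ TSet a b c, t * m₁ ∉ {m₂} * Iwahori v) :
    (TSet a b c * {m₁} * Iwahori v) ∩ (TSet a b c * {m₂} * Iwahori v) = ∅ := by
  rw [Set.eq_empty_iff_forall_notMem]
  intro z ⟨h₁, h₂⟩
  obtain ⟨t₁, ht₁, i₁, hi₁, rfl⟩ := mem_mul_singleton_mul_iff.mp h₁
  obtain ⟨t₂, ht₂, i₂, hi₂, he⟩ := mem_mul_singleton_mul_iff.mp h₂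
  have ht₂u := isUnit_det_of_mem_TSet ht₂
  have hi₁u := isUnit_det_of_mem_GL2O (Iwahori_subset_GL2O hi₁)
  refine h _ (mul_mem_TSet (inv_mem_TSet ht₂) ht₁) ?_
  rw [Set.singleton_mul]
  refine ⟨i₂ * i₁⁻¹, mul_mem_Iwahori hi₂ (inv_mem_Iwahori hi₁), ?_⟩
  calc m₂ * (i₂ * i₁⁻¹) = t₂⁻¹ * (t₂ * m₂ * i₂) * i₁⁻¹ := by
        simp only [mul_assoc, nonsing_inv_mul_cancel_left _ _ ht₂u]
    _ = t₂⁻¹ * t₁ * m₁ := by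
        rw [he, ← mul_assoc, ← mul_assoc, mul_nonsing_inv_cancel_right _ _ hi₁u]

lemma wmat_mem_GL2O : wmat F ∈ GL2O v := by
  simp [wmat, mem_GL2O_of_fin_two_iff]

lemma tmat_mul_wmat (x y : F) :
    tmat a b c x y * wmat F = !![-(c * y), x; -(x - b * y), -(a * y)] := by
  ext i j
  fin_cases i <;> fin_cases j <;> simp [tmat, wmat]

lemma tmat_mem_GL2O {x y : F} (hx : v x ≤ 1) (hy : v y ≤ 1) (hao : v a ≤ 1) (hbo : v b ≤ 1)
    (hc : v c = 1) (hN : v (x ^ 2 - b * x * y + a * c * y ^ 2) = 1) :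
    tmat a b c x y ∈ GL2O v := by
  refine mem_GL2O_iff.mpr ⟨?_, by rwa [det_tmat]⟩
  replace hc := hc.le
  simp only [Fin.forall_fin_two, tmat, of_apply, cons_val', cons_val_zero, cons_val_one,
    empty_val', cons_val_fin_one, ← Valuation.mem_integer_iff] at *
  aesop

lemma mem_TSet_mul_wmat_mul_Iwahori_of_form_unit (hao : v a ≤ 1) (hbo : v b ≤ 1) (hc : v c = 1)
    {k : Matrix (Fin 2) (Fin 2) F} (hk : k ∈ GL2O v)
    (hq : v (a * k 0 0 ^ 2 + b * k 0 0 * k 1 0 + c * k 1 0 ^ 2) = 1) :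
    k ∈ TSet a b c * {wmat F} * Iwahori v := by
  have hNu : v ((b * k 0 0 + c * k 1 0) ^ 2 - b * (b * k 0 0 + c * k 1 0) * k 0 0
      + a * c * k 0 0 ^ 2) = 1 := by
    rw [show (b * k 0 0 + c * k 1 0) ^ 2 - b * (b * k 0 0 + c * k 1 0) * k 0 0
      + a * c * k 0 0 ^ 2 = c * (a * k 0 0 ^ 2 + b * k 0 0 * k 1 0 + c * k 1 0 ^ 2) by ring,
      map_mul, hc, hq, one_mul]
  have ht : tmat a b c (b * k 0 0 + c * k 1 0) (k 0 0) ∈ GL2O v := by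
    refine tmat_mem_GL2O ?_ ((mem_GL2O_iff.mp hk).1 0 0) hao hbo hc hNu
    have := (mem_GL2O_iff.mp hk).1
    replace hc := hc.le
    simp only [Fin.forall_fin_two, ← Valuation.mem_integer_iff] at *
    aesop
  have hk' : k ∈ {tmat a b c (b * k 0 0 + c * k 1 0) (k 0 0) * wmat F} * Iwahori v := by
    rw [mem_singleton_mul_Iwahori_iff (mul_mem_GL2O ht wmat_mem_GL2O), tmat_mul_wmat]
    refine ⟨hk, ?_⟩
    simp only [of_apply, cons_val', cons_val_zero, cons_val_one, empty_val', cons_val_fin_one]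
    ring_nf
    simp
  rw [Set.singleton_mul] at hk'
  obtain ⟨i, hi, hki⟩ := hk'
  refine mem_mul_singleton_mul_iff.mpr ⟨_, ?_, i, hi, hki⟩
  exact mem_TSet_iff.mpr ⟨_, _, (isUnit_det_of_mem_GL2O ht).ne_zero, rfl⟩

lemma mul_mem_TSet_mul_singleton_mul {S : Set (Matrix (Fin 2) (Fin 2) F)}
    {m t z : Matrix (Fin 2) (Fin 2) F} (ht : t ∈ TSet a b c) (hz : z ∈ TSet a b c * {m} * S) :
    t * z ∈ TSet a b c * {m} * S := by
  obtain ⟨t', ht', s, hs, rfl⟩ := mem_mul_singleton_mul_iff.mp hz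
  exact mem_mul_singleton_mul_iff.mpr ⟨t * t', mul_mem_TSet ht ht', s, hs, by
    simp only [mul_assoc]⟩

lemma mem_TSet_mul_wmat_mul_Iwahori_of_residue (hao : v a ≤ 1) (hbo : v b ≤ 1) (hc : v c = 1)
    {k : Matrix (Fin 2) (Fin 2) F} (hk : k ∈ GL2O v)
    (hQ : v (k 0 0) = 1 → v (a + b * (k 1 0 / k 0 0) + c * (k 1 0 / k 0 0) ^ 2) = 1) :
    k ∈ TSet a b c * {wmat F} * Iwahori v := by
  by_cases hα : v (k 0 0) < 1
  · refine mem_TSet_mul_singleton_mul_Iwahori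
      ((mem_singleton_mul_Iwahori_iff wmat_mem_GL2O).mpr ⟨hk, ?_⟩)
    simpa [wmat] using hα
  · have hα1 : v (k 0 0) = 1 := le_antisymm ((mem_GL2O_iff.mp hk).1 0 0) (not_lt.mp hα)
    have hα0 : k 0 0 ≠ 0 := v.ne_zero_iff.mp (by simp [hα1])
    refine mem_TSet_mul_wmat_mul_Iwahori_of_form_unit hao hbo hc hk ?_
    rw [show a * k 0 0 ^ 2 + b * k 0 0 * k 1 0 + c * k 1 0 ^ 2
        = (a + b * (k 1 0 / k 0 0) + c * (k 1 0 / k 0 0) ^ 2) * k 0 0 ^ 2 by field_simp,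
      map_mul, hQ hα1, map_pow, hα1, one_pow, one_mul]

theorem TSet_mul_GL2O_eq_TSet_mul_wmat_mul_Iwahori (hao : v a ≤ 1) (hbo : v b ≤ 1)
    (hc : v c = 1) (hQ : ∀ u : F, v u ≤ 1 → v (a + b * u + c * u ^ 2) = 1) :
    TSet a b c * GL2O v = TSet a b c * {wmat F} * Iwahori v := by
  refine subset_antisymm ?_ (TSet_mul_singleton_mul_Iwahori_subset wmat_mem_GL2O)
  rintro _ ⟨t, ht, k, hk, rfl⟩
  refine mul_mem_TSet_mul_singleton_mul ht
    (mem_TSet_mul_wmat_mul_Iwahori_of_residue hao hbo hc hk fun hα => hQ _ ?_)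
  rw [map_div₀, hα, div_one]
  exact (mem_GL2O_iff.mp hk).1 1 0

lemma wmat_mem_TSet_mul_Iwahori (ha : v a = 1) (hbo : v b ≤ 1) (hc : v c = 1) :
    wmat F ∈ TSet a b c * Iwahori v := by
  have hg : tmat a b c 0 1 ∈ GL2O v :=
    tmat_mem_GL2O (by simp) (by simp) ha.le hbo hc (by simp [ha, hc])
  have hw : wmat F ∈ {tmat a b c 0 1} * Iwahori v :=
    (mem_singleton_mul_Iwahori_iff hg).mpr ⟨wmat_mem_GL2O, by simp [tmat, wmat]⟩
  rw [Set.singleton_mul] at hw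
  obtain ⟨i, hi, hwi⟩ := hw
  exact Set.mem_mul.mpr
    ⟨_, mem_TSet_iff.mpr ⟨0, 1, (isUnit_det_of_mem_GL2O hg).ne_zero, rfl⟩, i, hi, hwi⟩

theorem TSet_mul_GL2O_eq_TSet_mul_Iwahori (hao : v a ≤ 1) (hbo : v b ≤ 1) (hc : v c = 1)
    (hQ : ∀ u : F, v u ≤ 1 → v (a + b * u + c * u ^ 2) = 1) :
    TSet a b c * GL2O v = TSet a b c * Iwahori v := by
  have hw := wmat_mem_TSet_mul_Iwahori (by simpa using hQ 0 (by simp)) hbo hc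
  refine subset_antisymm ?_ (Set.mul_subset_mul_left Iwahori_subset_GL2O)
  rw [TSet_mul_GL2O_eq_TSet_mul_wmat_mul_Iwahori hao hbo hc hQ]
  intro z hz
  obtain ⟨t, ht, i, hi, rfl⟩ := mem_mul_singleton_mul_iff.mp hz
  obtain ⟨t', ht', i', hi', hwt⟩ := Set.mem_mul.mp hw
  rw [← hwt]
  exact Set.mem_mul.mpr ⟨t * t', mul_mem_TSet ht ht', i' * i, mul_mem_Iwahori hi' hi, by
    simp only [mul_assoc]⟩

lemma unipotent_mem_GL2O (hu₀ : v u₀ ≤ 1) : !![1, 0; u₀, 1] ∈ GL2O v := by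
  simp [mem_GL2O_of_fin_two_iff, hu₀]

theorem TSet_mul_GL2O_eq_union_of_residue_root (hao : v a ≤ 1) (hbo : v b ≤ 1)
    (hc : v c = 1) (hu₀ : v u₀ ≤ 1)
    (hQ : ∀ u : F, v u ≤ 1 → ¬ v (u - u₀) < 1 → v (a + b * u + c * u ^ 2) = 1) :
    TSet a b c * GL2O v
      = (TSet a b c * {wmat F} * Iwahori v) ∪ (TSet a b c * {!![1, 0; u₀, 1]} * Iwahori v) := by
  refine subset_antisymm ?_ (Set.union_subset
    (TSet_mul_singleton_mul_Iwahori_subset wmat_mem_GL2O)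
    (TSet_mul_singleton_mul_Iwahori_subset (unipotent_mem_GL2O hu₀)))
  rintro _ ⟨t, ht, k, hk, rfl⟩
  have hγ : v (k 1 0) ≤ 1 := (mem_GL2O_iff.mp hk).1 1 0
  by_cases hn : v (k 0 0) = 1 ∧ v (k 1 0 / k 0 0 - u₀) < 1
  · refine Or.inr (mul_mem_TSet_mul_singleton_mul ht (mem_TSet_mul_singleton_mul_Iwahori
      ((mem_singleton_mul_Iwahori_iff (unipotent_mem_GL2O hu₀)).mpr ⟨hk, ?_⟩)))
    have hα0 : k 0 0 ≠ 0 := v.ne_zero_iff.mp (by simp [hn.1])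
    change v (1 * k 1 0 - u₀ * k 0 0) < 1
    rw [show (1 : F) * k 1 0 - u₀ * k 0 0 = (k 1 0 / k 0 0 - u₀) * k 0 0 by field_simp,
      map_mul, hn.1, mul_one]
    exact hn.2
  · refine Or.inl (mul_mem_TSet_mul_singleton_mul ht
      (mem_TSet_mul_wmat_mul_Iwahori_of_residue hao hbo hc hk fun hα => hQ _ ?_ ?_))
    · rw [map_div₀, hα, div_one]
      exact hγ
    · exact fun h => hn ⟨hα, h⟩

theorem TSet_mul_wmat_mul_Iwahori_inter_eq_empty_of_residue_root (hc : v c = 1)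
    (hu₀ : v u₀ ≤ 1) (hroot : v (c * u₀ ^ 2 + b * u₀ + a) < 1) :
    (TSet a b c * {wmat F} * Iwahori v) ∩ (TSet a b c * {!![1, 0; u₀, 1]} * Iwahori v) = ∅ := by
  refine TSet_mul_singleton_mul_Iwahori_inter_eq_empty fun t ht htn => ?_
  obtain ⟨x, y, -, rfl⟩ := mem_TSet_iff.mp ht
  rw [mem_singleton_mul_Iwahori_iff (unipotent_mem_GL2O hu₀), tmat_mul_wmat,
    mem_GL2O_of_fin_two_iff] at htn
  obtain ⟨⟨hcy, hx, -, -, hN⟩, hε⟩ := htn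
  have hy : v y ≤ 1 := by simpa [hc] using hcy
  have hN' : -(c * y) * -(a * y) - x * -(x - b * y) = c * (c * u₀ ^ 2 + b * u₀ + a) * y ^ 2
      + -(1 * -(x - b * y) - u₀ * -(c * y)) * (x + c * u₀ * y) := by
    ring
  refine (hN ▸ hN' ▸ v.map_add_lt ?_ ?_).false
  · rw [map_mul, map_mul, map_pow, hc, one_mul]
    exact mul_lt_one_of_lt_of_le hroot (pow_le_one' hy 2)
  · rw [map_mul, Valuation.map_neg]
    refine mul_lt_one_of_lt_of_le (by simpa using hε) ?_
    replace hc := hc.le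
    simp only [← Valuation.mem_integer_iff] at *
    aesop

lemma TSet_mul_diag {π : F} (hπ : π ≠ 0) :
    TSet a b c * {!![π, 0; 0, 1]} = {!![π, 0; 0, 1]} * TSet (a * π ^ 2) (b * π) c := by
  have hconj : ∀ x y : F,
      tmat a b c x (π * y) * !![π, 0; 0, 1] = !![π, 0; 0, 1] * tmat (a * π ^ 2) (b * π) c x y := by
    intro x y
    ext i j
    fin_cases i <;> fin_cases j <;> simp [tmat] <;> ring
  have hdet : ∀ x y : F, (tmat a b c x (π * y)).det = (tmat (a * π ^ 2) (b * π) c x y).det := by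
    intro x y
    rw [det_tmat, det_tmat]
    ring
  ext z
  simp only [Set.mul_singleton, Set.singleton_mul, Set.mem_image]
  constructor
  · rintro ⟨t, ht, rfl⟩
    obtain ⟨x, y, hN, rfl⟩ := mem_TSet_iff.mp ht
    rw [← mul_div_cancel₀ y hπ] at hN ⊢
    exact ⟨_, mem_TSet_iff.mpr ⟨x, y / π, hdet x _ ▸ hN, rfl⟩, (hconj x _).symm⟩
  · rintro ⟨t, ht, rfl⟩
    obtain ⟨x, y, hN, rfl⟩ := mem_TSet_iff.mp ht
    exact ⟨_, mem_TSet_iff.mpr ⟨x, π * y, (hdet x y).symm ▸ hN, rfl⟩, hconj x y⟩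

theorem TSet_mul_diag_mul_GL2O_eq_union_and_inter_eq_empty (hao : v a ≤ 1) (hbo : v b ≤ 1)
    (hc : v c = 1) {π : F} (hπ0 : π ≠ 0) (hπ : v π < 1) :
    TSet a b c * {!![π, 0; 0, 1]} * GL2O v
        = (TSet a b c * {!![π, 0; 0, 1]} * Iwahori v)
          ∪ (TSet a b c * {!![π, 0; 0, 1] * wmat F} * Iwahori v)
      ∧ (TSet a b c * {!![π, 0; 0, 1]} * Iwahori v)
          ∩ (TSet a b c * {!![π, 0; 0, 1] * wmat F} * Iwahori v) = ∅ := by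
  have hP : IsUnit (!![π, 0; 0, 1] : Matrix (Fin 2) (Fin 2) F) := by
    simp [isUnit_iff_isUnit_det, det_fin_two_of, hπ0]
  have hao' : v (a * π ^ 2) ≤ 1 := by
    rw [map_mul, map_pow]
    exact mul_le_one' hao (pow_le_one' hπ.le 2)
  have hbo' : v (b * π) ≤ 1 := by
    rw [map_mul]
    exact mul_le_one' hbo hπ.le
  have hQ : ∀ u : F, v u ≤ 1 → ¬ v (u - 0) < 1 → v (a * π ^ 2 + b * π * u + c * u ^ 2) = 1 := by
    intro u hu hu'
    rw [sub_zero] at hu'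
    have hcu : v (c * u ^ 2) = 1 := by
      rw [map_mul, map_pow, hc, le_antisymm hu (not_lt.mp hu'), one_pow, one_mul]
    have hsmall : v (a * π ^ 2 + b * π * u) < 1 := by
      refine v.map_add_lt ?_ ?_ <;> simp only [map_mul, map_pow]
      · exact (mul_le_of_le_one_left' hao).trans_lt ((pow_lt_one_iff two_ne_zero).mpr hπ)
      · exact (mul_le_of_le_one_right' hu).trans_lt ((mul_le_of_le_one_left' hbo).trans_lt hπ)
    rw [v.map_add_eq_of_lt_right (hcu ▸ hsmall), hcu]
  have hroot : v (c * 0 ^ 2 + b * π * 0 + a * π ^ 2) < 1 := by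
    simpa using (mul_le_of_le_one_left' hao).trans_lt ((pow_lt_one_iff two_ne_zero).mpr hπ)
  have h₁ := TSet_mul_GL2O_eq_union_of_residue_root hao' hbo' hc (by simp) hQ
  have h₂ := TSet_mul_wmat_mul_Iwahori_inter_eq_empty_of_residue_root hc (by simp) hroot
  rw [← one_fin_two, Set.singleton_one, mul_one] at h₁ h₂
  simp only [← Set.singleton_mul_singleton, ← mul_assoc, TSet_mul_diag hπ0]
  simp only [mul_assoc {!![π, 0; 0, 1]}]
  refine ⟨by rw [h₁, Set.mul_union, Set.union_comm], ?_⟩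
  simp only [Set.singleton_mul]
  rw [← Set.image_inter hP.mul_right_injective, Set.inter_comm, h₂, Set.image_empty]

end

/-- Part (2) corresponds to the inert unramified case (the residual quadratic has
no root), part (3) to the ramified case (the residual quadratic has the unique root u₀). -/
theorem stmt8_general
    (v : Valuation F Zm0) (ϖ : F) (hϖ : v ϖ = ev 1)
    (a b c : F)
    (hao : v a ≤ ev 0) (hbo : v b ≤ ev 0) (hc : v c = ev 0) :
    -- (1)
    (∀ r : ℕ, 1 ≤ r →
      TSet a b c * ({!![ϖ ^ r, 0; 0, 1]} : Set (Matrix (Fin 2) (Fin 2) F)) * GL2O v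
        = (TSet a b c * ({!![ϖ ^ r, 0; 0, 1]} : Set (Matrix (Fin 2) (Fin 2) F)) * Iwahori v)
          ∪ (TSet a b c * ({!![ϖ ^ r, 0; 0, 1] * wmat F} : Set (Matrix (Fin 2) (Fin 2) F))
              * Iwahori v)
      ∧ (TSet a b c * ({!![ϖ ^ r, 0; 0, 1]} : Set (Matrix (Fin 2) (Fin 2) F)) * Iwahori v)
          ∩ (TSet a b c * ({!![ϖ ^ r, 0; 0, 1] * wmat F} : Set (Matrix (Fin 2) (Fin 2) F))
              * Iwahori v) = ∅)
    ∧
    -- (2)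
    ((∀ u : F, v u ≤ ev 0 → v (a + b * u + c * u ^ 2) = ev 0) →
      TSet a b c * GL2O v = TSet a b c * Iwahori v
      ∧ TSet a b c * GL2O v
          = TSet a b c * ({wmat F} : Set (Matrix (Fin 2) (Fin 2) F)) * Iwahori v)
    ∧
    -- (3)
    (∀ u₀ : F, v u₀ ≤ ev 0 → v (c * u₀ ^ 2 + b * u₀ + a) ≤ ev 1 →
      (∀ u : F, v u ≤ ev 0 → ¬ v (u - u₀) ≤ ev 1 → v (a + b * u + c * u ^ 2) = ev 0) →
      TSet a b c * GL2O v
        = (TSet a b c * ({wmat F} : Set (Matrix (Fin 2) (Fin 2) F)) * Iwahori v)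
          ∪ (TSet a b c * ({!![1, 0; u₀, 1]} : Set (Matrix (Fin 2) (Fin 2) F)) * Iwahori v)
      ∧ (TSet a b c * ({wmat F} : Set (Matrix (Fin 2) (Fin 2) F)) * Iwahori v)
          ∩ (TSet a b c * ({!![1, 0; u₀, 1]} : Set (Matrix (Fin 2) (Fin 2) F)) * Iwahori v)
          = ∅) := by
  simp only [ev_zero, le_ev_one_iff] at hao hbo hc ⊢
  have hϖ0 : ϖ ≠ 0 := v.ne_zero_iff.mp (hϖ ▸ WithZero.coe_ne_zero)
  have hϖ1 : v ϖ < 1 := le_ev_one_iff.mp hϖ.le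
  refine ⟨fun r hr => ?_, fun hQ => ?_, fun u₀ hu₀ hroot hQ => ?_⟩
  · exact TSet_mul_diag_mul_GL2O_eq_union_and_inter_eq_empty hao hbo hc (pow_ne_zero r hϖ0)
      (by rw [map_pow]; exact (pow_lt_one_iff (by omega)).mpr hϖ1)
  · exact ⟨TSet_mul_GL2O_eq_TSet_mul_Iwahori hao hbo hc hQ,
      TSet_mul_GL2O_eq_TSet_mul_wmat_mul_Iwahori hao hbo hc hQ⟩
  · exact ⟨TSet_mul_GL2O_eq_union_of_residue_root hao hbo hc hu₀ hQ,
      TSet_mul_wmat_mul_Iwahori_inter_eq_empty_of_residue_root hc hu₀ hroot⟩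

/-- double coset decompositions of T(F)·diag(ϖ^r,1)·GL₂(𝔬) into T(F)\GL₂(F)/I
double cosets.  Part (2) corresponds to the inert unramified case (the residual quadratic has
no root), part (3) to the ramified case (the residual quadratic has the unique root u₀). -/
theorem stmt8
    (v : Valuation F Zm0) (ϖ : F) (hϖ : v ϖ = ev 1)
    (a b c : F)
    (hao : v a ≤ ev 0) (hbo : v b ≤ ev 0) (hc : v c = ev 0)
    (hd0 : b ^ 2 - 4 * (a * c) ≠ 0)
    (hnonsq : ∀ s : F, s ^ 2 ≠ b ^ 2 - 4 * (a * c)) :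
    -- (1)
    (∀ r : ℕ, 1 ≤ r →
      TSet a b c * ({!![ϖ ^ r, 0; 0, 1]} : Set (Matrix (Fin 2) (Fin 2) F)) * GL2O v
        = (TSet a b c * ({!![ϖ ^ r, 0; 0, 1]} : Set (Matrix (Fin 2) (Fin 2) F)) * Iwahori v)
          ∪ (TSet a b c * ({!![ϖ ^ r, 0; 0, 1] * wmat F} : Set (Matrix (Fin 2) (Fin 2) F))
              * Iwahori v)
      ∧ (TSet a b c * ({!![ϖ ^ r, 0; 0, 1]} : Set (Matrix (Fin 2) (Fin 2) F)) * Iwahori v)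
          ∩ (TSet a b c * ({!![ϖ ^ r, 0; 0, 1] * wmat F} : Set (Matrix (Fin 2) (Fin 2) F))
              * Iwahori v) = ∅)
    ∧
    -- (2)
    ((∀ u : F, v u ≤ ev 0 → v (a + b * u + c * u ^ 2) = ev 0) →
      TSet a b c * GL2O v = TSet a b c * Iwahori v
      ∧ TSet a b c * GL2O v
          = TSet a b c * ({wmat F} : Set (Matrix (Fin 2) (Fin 2) F)) * Iwahori v)
    ∧
    -- (3)
    (∀ u₀ : F, v u₀ ≤ ev 0 → v (c * u₀ ^ 2 + b * u₀ + a) ≤ ev 1 →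
      (∀ u : F, v u ≤ ev 0 → ¬ v (u - u₀) ≤ ev 1 → v (a + b * u + c * u ^ 2) = ev 0) →
      TSet a b c * GL2O v
        = (TSet a b c * ({wmat F} : Set (Matrix (Fin 2) (Fin 2) F)) * Iwahori v)
          ∪ (TSet a b c * ({!![1, 0; u₀, 1]} : Set (Matrix (Fin 2) (Fin 2) F)) * Iwahori v)
      ∧ (TSet a b c * ({wmat F} : Set (Matrix (Fin 2) (Fin 2) F)) * Iwahori v)
          ∩ (TSet a b c * ({!![1, 0; u₀, 1]} : Set (Matrix (Fin 2) (Fin 2) F)) * Iwahori v)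
          = ∅) :=
  stmt8_general v ϖ hϖ a b c hao hbo hc
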